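/- Let S = k[x_1,...,x_n] with Poisson bracket {x_i,x_j} = Λ_{ij} and suppose f ∈ S, f ≠ 0, with S an integral domain, satisfies {x_i, f} = Z_i f for all i with Z_i ∈ S. Then for all i, j: {x_i, Z_j} − {x_j, Z_i} − ∑_ℓ Z_ℓ ∂Λ_{ij}/∂x_ℓ = 0. -/
import Mathlib


open MvPolynomial

/-- The Poisson bracket on a polynomial ring extending `Λ i j = {x_i, x_j}` as a
biderivation. -/
noncomputable def pb {k : Type*} [CommSemiring k] {σ : Type*} [Fintype σ] [DecidableEq σ]
    (Λ : σ → σ → MvPolynomial σ k) (f g : MvPolynomial σ k) : MvPolynomial σ k :=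
  ∑ i, ∑ j, Λ i j * pderiv i f * pderiv j g

lemma pb_X_left {k : Type*} [CommSemiring k] {σ : Type*} [Fintype σ] [DecidableEq σ]
    (Λ : σ → σ → MvPolynomial σ k) (i : σ) (g : MvPolynomial σ k) :
    pb Λ (X i) g = ∑ b, Λ i b * pderiv b g := by
  unfold pb
  rw [Finset.sum_eq_single i]
  · simp
  · intro a _ ha
    simp [pderiv_X_of_ne (Ne.symm ha)]
  · simp

lemma pb_right_mul {k : Type*} [CommSemiring k] {σ : Type*} [Fintype σ] [DecidableEq σ]
    (Λ : σ → σ → MvPolynomial σ k) (g a b : MvPolynomial σ k) :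
    pb Λ g (a * b) = pb Λ g a * b + a * pb Λ g b := by
  unfold pb
  rw [Finset.sum_mul, Finset.mul_sum, ← Finset.sum_add_distrib]
  refine Finset.sum_congr rfl fun x _ => ?_
  rw [Finset.sum_mul, Finset.mul_sum, ← Finset.sum_add_distrib]
  refine Finset.sum_congr rfl fun y _ => ?_
  rw [pderiv_mul]
  ring

lemma pb_right_neg {k : Type*} [CommRing k] {σ : Type*} [Fintype σ] [DecidableEq σ]
    (Λ : σ → σ → MvPolynomial σ k) (g a : MvPolynomial σ k) :
    pb Λ g (-a) = - pb Λ g a := by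
  simp [pb, Finset.sum_neg_distrib]

/-- if `{x_i,f} = Z_i f` for a nonzero `f` (in the integral domain
`S = k[x_1,…,x_n]`), then `{x_i,Z_j} - {x_j,Z_i} - ∑_ℓ Z_ℓ ∂Λ_{ij}/∂x_ℓ = 0`. -/
theorem principal_MC_identity
    (k : Type*) [Field k] [CharZero k] (n : ℕ)
    (Λ : Fin n → Fin n → MvPolynomial (Fin n) k)
    (hanti : ∀ i j, Λ i j = - Λ j i)
    (hjac : ∀ f g h : MvPolynomial (Fin n) k,
        pb Λ f (pb Λ g h) + pb Λ g (pb Λ h f) + pb Λ h (pb Λ f g) = 0)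
    (f : MvPolynomial (Fin n) k) (hf : f ≠ 0)
    (Z : Fin n → MvPolynomial (Fin n) k)
    (hZ : ∀ i, pb Λ (X i) f = Z i * f) :
    ∀ i j, pb Λ (X i) (Z j) - pb Λ (X j) (Z i) - ∑ l, Z l * pderiv l (Λ i j) = 0 := by
  have hswap : ∀ g h : MvPolynomial (Fin n) k, pb Λ g h = - pb Λ h g := by
    intro g h
    have : pb Λ g h + pb Λ h g = 0 := by
      unfold pb
      rw [show (∑ a, ∑ b, Λ a b * pderiv a h * pderiv b g)
            = ∑ b, ∑ a, Λ a b * pderiv a h * pderiv b g from Finset.sum_comm]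
      rw [← Finset.sum_add_distrib]
      apply Finset.sum_eq_zero
      intro a _
      rw [← Finset.sum_add_distrib]
      apply Finset.sum_eq_zero
      intro b _
      rw [hanti b a]
      ring
    exact eq_neg_of_add_eq_zero_left this
  intro i j
  have hXX : pb Λ (X i) (X j) = Λ i j := by
    rw [pb_X_left, Finset.sum_eq_single j]
    · simp
    · intro b _ hb; simp [pderiv_X_of_ne hb.symm]
    · simp
  have hLam : pb Λ (Λ i j) f = ∑ a, pderiv a (Λ i j) * (Z a * f) := by
    unfold pb
    refine Finset.sum_congr rfl fun a _ => ?_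
    rw [← hZ a, pb_X_left, Finset.mul_sum]
    refine Finset.sum_congr rfl fun b _ => ?_
    ring
  have hsum : (∑ a, pderiv a (Λ i j) * (Z a * f))
      = (∑ l, Z l * pderiv l (Λ i j)) * f := by
    rw [Finset.sum_mul]
    exact Finset.sum_congr rfl fun a _ => by ring
  have H := hjac (X i) (X j) f
  rw [hZ j, hswap f (X i), hZ i, pb_right_neg, hXX, hswap f (Λ i j), hLam, hsum,
    pb_right_mul, pb_right_mul, hZ i, hZ j] at H
  have E : (pb Λ (X i) (Z j) - pb Λ (X j) (Z i) - ∑ l, Z l * pderiv l (Λ i j)) * f = 0 := by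
    linear_combination H
  rcases mul_eq_zero.mp E with h | h
  · exact h
  · exact absurd h hf
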